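/- Let α > 0, D_F > 0, 0 ≤ D_0 < D_1, and γ_B, γ_F > 0 with γ_B·γ_F < 1, and let K ≥ 1 be a natural number. Define Φ_K(x) = (2/D_F²)·∫_0^{D_F} (1 − exp(−(1+r^α)·x))^K·r dr, f_B(w) = (2/(D_1²−D_0²))·∫_{D_0}^{D_1} (1+r^α)·exp(−(1+r^α)·w)·r dr, and F_B(y) = (2/(D_1²−D_0²))·∫_{D_0}^{D_1} (1 − exp(−(1+r^α)·y))·r dr. For P > 0, set α_1(P) = γ_B·(1+γ_F)/P and α_2(P) = γ_B·(1+γ_F)/(P·(1−γ_B·γ_F)), and define P_out(P) = ∫_0^{α_2(P)} f_B(w)·Φ_K(γ_F·w + γ_F/P) dw − ∫_{α_1(P)}^{α_2(P)} f_B(w)·Φ_K((P·w − γ_B)/(P·γ_B)) dw + (1 − F_B(α_1(P)))·Φ_K(γ_F/P). Then lim_{P→∞} P^K·P_out(P) = γ_F^K·(2/D_F²)·∫_0^{D_F} (1+r^α)^K·r dr; in particular a diversity order of K is achieved. -/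

import Mathlib

/-!
Write `c(r) = 1 + r^α` and `E` for the mean over the disc. Applying
`t e^{-t} ≤ 1 - e^{-t} ≤ t` to `t = c(r) x` squeezes `Φ_K(x) / x^K` between
`e^{-K x max c} E[c^K]` and `E[c^K]`, so `P^K Φ_K(γ_F/P) → γ_F^K E[c^K]`, and likewise
`F_B(α_1(P)) → 0`. The two integrals of `P_out` run over windows of length `O(1/P)`
on which `f_B ≤ f_B(0)` and the argument of `Φ_K` is `O(1/P)`; hence they are `O(P^{-K-1})`.
-/

open Real Filter MeasureTheory Set Topology Interval

theorem one_sub_exp_neg_nonneg {t : ℝ} (ht : 0 ≤ t) : 0 ≤ 1 - exp (-t) :=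
  sub_nonneg.2 (exp_le_one_iff.2 (neg_nonpos.2 ht))

theorem one_sub_exp_neg_le (t : ℝ) : 1 - exp (-t) ≤ t := by
  linarith [one_sub_le_exp_neg t]

theorem mul_exp_neg_le_one_sub_exp_neg (t : ℝ) : t * exp (-t) ≤ 1 - exp (-t) := by
  have h : exp t * exp (-t) = 1 := by rw [← exp_add, add_neg_cancel, exp_zero]
  nlinarith [add_one_le_exp t, exp_pos (-t)]

theorem tendsto_nhdsGT_zero_of_tendsto_div {h : ℝ → ℝ} {L : ℝ}
    (hh : Tendsto (fun x => h x / x) (𝓝[>] 0) (𝓝 L)) : Tendsto h (𝓝[>] 0) (𝓝 0) := by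
  have hmul := (tendsto_nhdsWithin_of_tendsto_nhds tendsto_id).mul hh
  rw [zero_mul] at hmul
  refine hmul.congr' ?_
  filter_upwards [self_mem_nhdsWithin] with x (hx : 0 < x)
  exact mul_div_cancel₀ _ hx.ne'

/-- The mean of `g ‖z‖` for `z` uniformly distributed in the planar annulus `a ≤ ‖z‖ ≤ b`. -/
noncomputable def radialMean (a b : ℝ) (g : ℝ → ℝ) : ℝ :=
  2 / (b ^ 2 - a ^ 2) * ∫ r in a..b, g r * r

section radialMean

variable {a b : ℝ}

theorem radialMean_nonneg (ha : 0 ≤ a) (hab : a ≤ b) {g : ℝ → ℝ}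
    (hg : ∀ r ∈ Icc a b, 0 ≤ g r) : 0 ≤ radialMean a b g := by
  have hb : 0 ≤ b ^ 2 - a ^ 2 := by nlinarith
  exact mul_nonneg (by positivity) <| intervalIntegral.integral_nonneg hab fun r hr =>
    mul_nonneg (hg r hr) (ha.trans hr.1)

theorem radialMean_mono (ha : 0 ≤ a) (hab : a ≤ b) {f g : ℝ → ℝ}
    (hf : IntervalIntegrable f volume a b) (hg : IntervalIntegrable g volume a b)
    (hfg : ∀ r ∈ Icc a b, f r ≤ g r) : radialMean a b f ≤ radialMean a b g := by
  have hb : 0 ≤ b ^ 2 - a ^ 2 := by nlinarith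
  refine mul_le_mul_of_nonneg_left (intervalIntegral.integral_mono_on hab
    (hf.mul_continuousOn continuousOn_id) (hg.mul_continuousOn continuousOn_id)
    fun r hr => mul_le_mul_of_nonneg_right (hfg r hr) (ha.trans hr.1)) (by positivity)

theorem radialMean_const_mul (k : ℝ) (g : ℝ → ℝ) :
    radialMean a b (fun r => k * g r) = k * radialMean a b g := by
  simp only [radialMean, mul_assoc, intervalIntegral.integral_const_mul]
  ring

variable {c : ℝ → ℝ} {K : ℕ}

theorem abs_radialMean_mul_exp_neg_le (ha : 0 ≤ a) (hab : a ≤ b) (hc : ContinuousOn c (Icc a b))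
    (hc0 : ∀ r ∈ Icc a b, 0 ≤ c r) {w : ℝ} (hw : 0 ≤ w) :
    |radialMean a b (fun r => c r * exp (-c r * w))| ≤ radialMean a b c := by
  have hexp : ∀ r ∈ Icc a b, exp (-c r * w) ≤ 1 := fun r hr =>
    exp_le_one_iff.2 (by nlinarith [hc0 r hr])
  rw [abs_of_nonneg (radialMean_nonneg ha hab fun r hr => mul_nonneg (hc0 r hr) (exp_pos _).le)]
  refine radialMean_mono ha hab ((by fun_prop : ContinuousOn _ _).intervalIntegrable_of_Icc hab)
    (hc.intervalIntegrable_of_Icc hab) fun r hr => ?_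
  simpa using mul_le_mul_of_nonneg_left (hexp r hr) (hc0 r hr)

theorem radialMean_one_sub_exp_pow_le (ha : 0 ≤ a) (hab : a ≤ b)
    (hc : ContinuousOn c (Icc a b)) (hc0 : ∀ r ∈ Icc a b, 0 ≤ c r) {x : ℝ} (hx : 0 ≤ x) :
    radialMean a b (fun r => (1 - exp (-c r * x)) ^ K) ≤
      radialMean a b (fun r => c r ^ K) * x ^ K := by
  rw [mul_comm, ← radialMean_const_mul]
  refine radialMean_mono ha hab ((by fun_prop : ContinuousOn _ _).intervalIntegrable_of_Icc hab)
    ((by fun_prop : ContinuousOn _ _).intervalIntegrable_of_Icc hab) fun r hr => ?_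
  have hcx : 0 ≤ c r * x := mul_nonneg (hc0 r hr) hx
  rw [← mul_pow, mul_comm x, neg_mul]
  exact pow_le_pow_left₀ (one_sub_exp_neg_nonneg hcx) (one_sub_exp_neg_le _) K

theorem abs_radialMean_one_sub_exp_pow_le (ha : 0 ≤ a) (hab : a ≤ b)
    (hc : ContinuousOn c (Icc a b)) (hc0 : ∀ r ∈ Icc a b, 0 ≤ c r) {x : ℝ} (hx : 0 ≤ x) :
    |radialMean a b (fun r => (1 - exp (-c r * x)) ^ K)| ≤
      radialMean a b (fun r => c r ^ K) * x ^ K := by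
  rw [abs_of_nonneg (radialMean_nonneg ha hab fun r hr => pow_nonneg
    (by rw [neg_mul]; exact one_sub_exp_neg_nonneg (mul_nonneg (hc0 r hr) hx)) K)]
  exact radialMean_one_sub_exp_pow_le ha hab hc hc0 hx

theorem exp_mul_radialMean_le_radialMean_one_sub_exp_pow (ha : 0 ≤ a) (hab : a ≤ b)
    (hc : ContinuousOn c (Icc a b)) (hc0 : ∀ r ∈ Icc a b, 0 ≤ c r) {M : ℝ}
    (hcM : ∀ r ∈ Icc a b, c r ≤ M) {x : ℝ} (hx : 0 ≤ x) :
    exp (-(K * M * x)) * radialMean a b (fun r => c r ^ K) * x ^ K ≤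
      radialMean a b (fun r => (1 - exp (-c r * x)) ^ K) := by
  rw [mul_right_comm, ← radialMean_const_mul]
  refine radialMean_mono ha hab ((by fun_prop : ContinuousOn _ _).intervalIntegrable_of_Icc hab)
    ((by fun_prop : ContinuousOn _ _).intervalIntegrable_of_Icc hab) fun r hr => ?_
  have hcx : 0 ≤ c r * x := mul_nonneg (hc0 r hr) hx
  calc exp (-(K * M * x)) * x ^ K * c r ^ K
      ≤ exp (K * -(c r * x)) * (c r * x) ^ K := by
        rw [mul_assoc, ← mul_pow, mul_comm x]
        gcongr
        nlinarith [mul_nonneg (mul_nonneg K.cast_nonneg (sub_nonneg.2 (hcM r hr))) hx]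
    _ = (c r * x * exp (-(c r * x))) ^ K := by rw [exp_nat_mul, mul_pow, mul_pow]; ring
    _ ≤ (1 - exp (-c r * x)) ^ K := by
        rw [neg_mul]
        exact pow_le_pow_left₀ (mul_nonneg hcx (exp_pos _).le)
          (mul_exp_neg_le_one_sub_exp_neg _) K

theorem tendsto_radialMean_one_sub_exp_pow_div (ha : 0 ≤ a) (hab : a ≤ b)
    (hc : ContinuousOn c (Icc a b)) (hc0 : ∀ r ∈ Icc a b, 0 ≤ c r) :
    Tendsto (fun x => radialMean a b (fun r => (1 - exp (-c r * x)) ^ K) / x ^ K) (𝓝[>] 0)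
      (𝓝 (radialMean a b (fun r => c r ^ K))) := by
  obtain ⟨M, hM⟩ := isCompact_Icc.exists_bound_of_continuousOn hc
  set m := radialMean a b (fun r => c r ^ K)
  have hlow : Tendsto (fun x : ℝ => exp (-(K * M * x)) * m) (𝓝[>] 0) (𝓝 m) := by
    have h : Continuous fun x : ℝ => exp (-(K * M * x)) * m := by fun_prop
    simpa using (h.tendsto 0).mono_left nhdsWithin_le_nhds
  refine tendsto_of_tendsto_of_tendsto_of_le_of_le' hlow tendsto_const_nhds ?_ ?_ <;>
    filter_upwards [self_mem_nhdsWithin] with x (hx : 0 < x)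
  · rw [le_div_iff₀ (pow_pos hx K)]
    exact exp_mul_radialMean_le_radialMean_one_sub_exp_pow ha hab hc hc0
      (fun r hr => (le_abs_self _).trans (hM r hr)) hx.le
  · rw [div_le_iff₀ (pow_pos hx K)]
    exact radialMean_one_sub_exp_pow_le ha hab hc hc0 hx.le

theorem tendsto_radialMean_one_sub_exp_nhdsGT_zero (ha : 0 ≤ a) (hab : a ≤ b)
    (hc : ContinuousOn c (Icc a b)) (hc0 : ∀ r ∈ Icc a b, 0 ≤ c r) :
    Tendsto (fun y => radialMean a b (fun r => 1 - exp (-c r * y))) (𝓝[>] 0) (𝓝 0) :=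
  tendsto_nhdsGT_zero_of_tendsto_div <| by
    simpa only [pow_one] using tendsto_radialMean_one_sub_exp_pow_div (K := 1) ha hab hc hc0

end radialMean

theorem tendsto_const_div_atTop_nhdsGT_zero {k : ℝ} (hk : 0 < k) :
    Tendsto (fun P : ℝ => k / P) atTop (𝓝[>] 0) :=
  tendsto_nhdsWithin_iff.2 ⟨tendsto_const_nhds.div_atTop tendsto_id,
    (eventually_gt_atTop 0).mono fun _ hP => div_pos hk hP⟩

theorem tendsto_pow_mul_comp_const_div {h : ℝ → ℝ} {L k : ℝ} {K : ℕ} (hk : 0 < k)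
    (hh : Tendsto (fun x => h x / x ^ K) (𝓝[>] 0) (𝓝 L)) :
    Tendsto (fun P => P ^ K * h (k / P)) atTop (𝓝 (k ^ K * L)) := by
  refine ((hh.comp (tendsto_const_div_atTop_nhdsGT_zero hk)).const_mul (k ^ K)).congr' ?_
  filter_upwards [eventually_gt_atTop 0] with P hP
  simp only [Function.comp_apply, div_pow]
  field_simp

theorem mul_add_div_mem_Icc {γ c P w : ℝ} (hγ : 0 ≤ γ) (hP : 0 < P) (hw : w ∈ Ioc 0 (c / P)) :
    γ * w + γ / P ∈ Icc 0 (γ * (c + 1) / P) := by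
  refine ⟨by have := hw.1; positivity, ?_⟩
  calc γ * w + γ / P ≤ γ * (c / P) + γ / P := by gcongr; exact hw.2
    _ = γ * (c + 1) / P := by ring

theorem sub_div_mul_mem_Icc {γ c₁ c₂ P w : ℝ} (hγ : 0 < γ) (hγc₁ : γ ≤ c₁) (hP : 0 < P)
    (hw : w ∈ Ioc (c₁ / P) (c₂ / P)) : (P * w - γ) / (P * γ) ∈ Icc 0 (c₂ / γ / P) := by
  have hc₁w : c₁ < P * w := (div_lt_iff₀' hP).1 hw.1
  have hwc₂ : P * w ≤ c₂ := (le_div_iff₀' hP).1 hw.2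
  refine ⟨div_nonneg (by linarith) (by positivity), ?_⟩
  rw [div_div, mul_comm γ]
  gcongr
  linarith

theorem tendsto_pow_mul_intervalIntegral_mul_nhds_zero {f g : ℝ → ℝ} {v : ℝ → ℝ → ℝ}
    {B C c₁ c₂ m : ℝ} {K : ℕ} (hf : ∀ w, 0 ≤ w → |f w| ≤ B) (hg : ∀ x, 0 ≤ x → |g x| ≤ C * x ^ K)
    (hc₁ : 0 ≤ c₁) (hc₁₂ : c₁ ≤ c₂)
    (hv : ∀ P, 0 < P → ∀ w ∈ Ioc (c₁ / P) (c₂ / P), v P w ∈ Icc 0 (m / P)) :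
    Tendsto (fun P => P ^ K * ∫ w in c₁ / P..c₂ / P, f w * g (v P w)) atTop (𝓝 0) := by
  have hB : 0 ≤ B := (abs_nonneg _).trans (hf 0 le_rfl)
  have hC : 0 ≤ C := by simpa using (abs_nonneg _).trans (hg 1 zero_le_one)
  refine squeeze_zero_norm' ?_ (tendsto_const_nhds.div_atTop tendsto_id :
    Tendsto (fun P : ℝ => B * C * m ^ K * (c₂ - c₁) / P) atTop (𝓝 0))
  filter_upwards [eventually_gt_atTop 0] with P hP
  have hle : c₁ / P ≤ c₂ / P := by gcongr
  have hpt : ∀ w ∈ Ι (c₁ / P) (c₂ / P), ‖f w * g (v P w)‖ ≤ B * (C * (m / P) ^ K) := by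
    intro w hw
    rw [uIoc_of_le hle] at hw
    obtain ⟨hv0, hvm⟩ := hv P hP w hw
    rw [norm_mul, Real.norm_eq_abs, Real.norm_eq_abs]
    exact mul_le_mul (hf w ((div_nonneg hc₁ hP.le).trans hw.1.le))
      ((hg _ hv0).trans (by gcongr)) (abs_nonneg _) hB
  calc ‖P ^ K * ∫ w in c₁ / P..c₂ / P, f w * g (v P w)‖
      = P ^ K * ‖∫ w in c₁ / P..c₂ / P, f w * g (v P w)‖ := by
        rw [norm_mul, norm_pow, Real.norm_of_nonneg hP.le]
    _ ≤ P ^ K * (B * (C * (m / P) ^ K) * |c₂ / P - c₁ / P|) := by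
        gcongr
        exact intervalIntegral.norm_integral_le_of_norm_le_const hpt
    _ = B * C * m ^ K * (c₂ - c₁) / P := by
        rw [abs_of_nonneg (sub_nonneg.2 hle), div_pow]
        field_simp

theorem cs_sgf_full_diversity_small_rates_general (α DF D0 D1 γB γF : ℝ)
    (hα : 0 < α) (hDF : 0 < DF) (hD0 : 0 ≤ D0) (hD01 : D0 < D1)
    (hγB : 0 < γB) (hγF : 0 < γF) (hprod : γB * γF < 1) (K : ℕ)
    (Φ fB FB Pout : ℝ → ℝ) (a1 a2 : ℝ → ℝ)
    (hΦ : ∀ x, Φ x = (2 / DF ^ 2) *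
      ∫ r in (0:ℝ)..DF, (1 - Real.exp (-(1 + r ^ α) * x)) ^ K * r)
    (hfB : ∀ w, fB w = (2 / (D1 ^ 2 - D0 ^ 2)) *
      ∫ r in D0..D1, (1 + r ^ α) * Real.exp (-(1 + r ^ α) * w) * r)
    (hFB : ∀ y, FB y = (2 / (D1 ^ 2 - D0 ^ 2)) *
      ∫ r in D0..D1, (1 - Real.exp (-(1 + r ^ α) * y)) * r)
    (ha1 : ∀ P, a1 P = γB * (1 + γF) / P)
    (ha2 : ∀ P, a2 P = γB * (1 + γF) / (P * (1 - γB * γF)))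
    (hPout : ∀ P : ℝ, 0 < P → Pout P =
      (∫ w in (0:ℝ)..(a2 P), fB w * Φ (γF * w + γF / P)) -
        (∫ w in (a1 P)..(a2 P), fB w * Φ ((P * w - γB) / (P * γB))) +
        (1 - FB (a1 P)) * Φ (γF / P)) :
    Filter.Tendsto (fun P : ℝ => P ^ K * Pout P) Filter.atTop
      (nhds (γF ^ K * ((2 / DF ^ 2) * ∫ r in (0:ℝ)..DF, (1 + r ^ α) ^ K * r))) := by
  have hc : Continuous fun r : ℝ => 1 + r ^ α := continuous_const.add (continuous_rpow_const hα.le)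
  have hc0 {a b : ℝ} (ha : 0 ≤ a) : ∀ r ∈ Icc a b, 0 ≤ 1 + r ^ α := fun r hr => by
    have := ha.trans hr.1; positivity
  have hΦ' x : Φ x = radialMean 0 DF (fun r => (1 - exp (-(1 + r ^ α) * x)) ^ K) := by
    simp [hΦ, radialMean]
  have hfB_le w (hw : 0 ≤ w) : |fB w| ≤ radialMean D0 D1 (fun r => 1 + r ^ α) := by
    rw [hfB]; exact abs_radialMean_mul_exp_neg_le hD0 hD01.le hc.continuousOn (hc0 hD0) hw
  have hΦ_le x (hx : 0 ≤ x) : |Φ x| ≤ radialMean 0 DF (fun r => (1 + r ^ α) ^ K) * x ^ K := by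
    rw [hΦ']; exact abs_radialMean_one_sub_exp_pow_le le_rfl hDF.le hc.continuousOn (hc0 le_rfl) hx
  set c₁ := γB * (1 + γF)
  set c₂ := c₁ / (1 - γB * γF)
  have hc₁ : 0 < c₁ := by positivity
  have hc₁₂ : c₁ ≤ c₂ := le_div_self hc₁.le (by linarith) (by nlinarith)
  have hΦlim : Tendsto (fun P => P ^ K * Φ (γF / P)) atTop
      (𝓝 (γF ^ K * radialMean 0 DF (fun r => (1 + r ^ α) ^ K))) := by
    simpa only [hΦ'] using tendsto_pow_mul_comp_const_div hγF
      (tendsto_radialMean_one_sub_exp_pow_div le_rfl hDF.le hc.continuousOn (hc0 le_rfl))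
  have hFBlim : Tendsto (fun P => FB (c₁ / P)) atTop (𝓝 0) := by
    rw [show FB = _ from funext hFB]
    exact (tendsto_radialMean_one_sub_exp_nhdsGT_zero hD0 hD01.le hc.continuousOn (hc0 hD0)).comp
      (tendsto_const_div_atTop_nhdsGT_zero hc₁)
  have hT₁ := tendsto_pow_mul_intervalIntegral_mul_nhds_zero hfB_le hΦ_le le_rfl
    (hc₁.le.trans hc₁₂) fun P hP w hw => mul_add_div_mem_Icc hγF.le hP (by rwa [zero_div] at hw)
  have hT₂ := tendsto_pow_mul_intervalIntegral_mul_nhds_zero hfB_le hΦ_le hc₁.le hc₁₂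
    fun P hP w hw => sub_div_mul_mem_Icc hγB (le_mul_of_one_le_right hγB.le (by linarith)) hP hw
  have hlim := (hT₁.sub hT₂).add ((hFBlim.const_sub 1).mul hΦlim)
  rw [sub_zero, sub_zero, zero_add, one_mul] at hlim
  convert hlim.congr' ?_ using 2
  · simp [radialMean]
  filter_upwards [eventually_gt_atTop 0] with P hP
  have ha2' : a2 P = c₂ / P := by rw [ha2, div_div, mul_comm P]
  rw [hPout P hP, ha1, ha2', zero_div]
  ring

/-- Exact-integral version of the first half of Corollary 4: when `γB γF < 1`, the
fixed-power CS-SGF outage probability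
`P_out(P) = ∫_0^{α2(P)} fB(w) Φ(γF w + γF/P) dw - ∫_{α1(P)}^{α2(P)} fB(w) Φ((P w - γB)/(P γB)) dw
 + (1 - FB(α1(P))) Φ(γF/P)`
satisfies `P^K P_out(P) → γF^K (2/DF²) ∫_0^{DF} (1+r^α)^K r dr` as `P → ∞`,
i.e. full diversity order `K` is achieved. -/
theorem cs_sgf_full_diversity_small_rates (α DF D0 D1 γB γF : ℝ)
    (hα : 0 < α) (hDF : 0 < DF) (hD0 : 0 ≤ D0) (hD01 : D0 < D1)
    (hγB : 0 < γB) (hγF : 0 < γF) (hprod : γB * γF < 1) (K : ℕ) (hK : 1 ≤ K)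
    (Φ fB FB Pout : ℝ → ℝ) (a1 a2 : ℝ → ℝ)
    (hΦ : ∀ x, Φ x = (2 / DF ^ 2) *
      ∫ r in (0:ℝ)..DF, (1 - Real.exp (-(1 + r ^ α) * x)) ^ K * r)
    (hfB : ∀ w, fB w = (2 / (D1 ^ 2 - D0 ^ 2)) *
      ∫ r in D0..D1, (1 + r ^ α) * Real.exp (-(1 + r ^ α) * w) * r)
    (hFB : ∀ y, FB y = (2 / (D1 ^ 2 - D0 ^ 2)) *
      ∫ r in D0..D1, (1 - Real.exp (-(1 + r ^ α) * y)) * r)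
    (ha1 : ∀ P, a1 P = γB * (1 + γF) / P)
    (ha2 : ∀ P, a2 P = γB * (1 + γF) / (P * (1 - γB * γF)))
    (hPout : ∀ P : ℝ, 0 < P → Pout P =
      (∫ w in (0:ℝ)..(a2 P), fB w * Φ (γF * w + γF / P)) -
        (∫ w in (a1 P)..(a2 P), fB w * Φ ((P * w - γB) / (P * γB))) +
        (1 - FB (a1 P)) * Φ (γF / P)) :
    Filter.Tendsto (fun P : ℝ => P ^ K * Pout P) Filter.atTop
      (nhds (γF ^ K * ((2 / DF ^ 2) * ∫ r in (0:ℝ)..DF, (1 + r ^ α) ^ K * r))) :=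
  cs_sgf_full_diversity_small_rates_general α DF D0 D1 γB γF hα hDF hD0 hD01 hγB hγF hprod K Φ fB FB
    Pout a1 a2 hΦ hfB hFB ha1 ha2 hPout
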